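/- The low-sensitivity interestingness function Int_p has sensitivity at most 1 and range [0, |D_c|]. Precisely: (a) for every clustering function f : T → C, cluster label c ∈ C, attribute A, dataset D and tuple t, writing D' = D + {t}, one has |Int_p(D', f, c, A) − Int_p(D, f, c, A)| ≤ 1; and (b) for every dataset D, 0 ≤ Int_p(D, f, c, A) ≤ |D_c|, where D_c is the sub-multiset of tuples t of D with f(t) = c. -/

import Mathlib

/-!
Write `X a = cnt_{A=a}(D_c) - r · cnt_{A=a}(D)` with `r = |D_c| / |D|`, so that `Int_p = ½ Σ |X a|`.
Adding a tuple `t` changes `X` by exactly `(ε - r') · (e - h / |D|)`, where `ε ∈ {0, 1}` records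
whether `t` lands in the cluster, `r' ∈ [0, 1]` is the new ratio, `e` is the indicator of `A t` and
`h` the histogram of `A` on `D`. Since `e` and `h / |D|` are probability vectors, the `ℓ¹`-norm of the
change is at most `2`, hence `Int_p` moves by at most `1`. For the range,
`|X a| ≤ cnt_{A=a}(D_c) + r · cnt_{A=a}(D)`, and both terms sum to `|D_c|`.
-/

noncomputable section

/-- The cluster of label `c`: the sub-multiset of tuples of `D` mapped to `c` by `f`. -/
def cl {T C : Type*} [DecidableEq C] (D : Multiset T) (f : T → C) (c : C) : Multiset T :=
  D.filter (fun t => f t = c)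

/-- The low-sensitivity interestingness of attribute `A` for cluster `c`:
`Int_p(D, f, c, A) = (1/2) Σ_{a∈V} | cnt_{A=a}(D_c) − (|D_c|/|D|)·cnt_{A=a}(D) |`
(equal to `0` when `D` is empty, by the convention `x / 0 = 0`). -/
def Intp {T V C : Type*} [Fintype V] [DecidableEq V] [DecidableEq C]
    (D : Multiset T) (f : T → C) (c : C) (A : T → V) : ℝ :=
  (1 / 2) * ∑ a : V,
    |(((cl D f c).map A).count a : ℝ) -
      ((Multiset.card (cl D f c) : ℝ) / (Multiset.card D : ℝ)) * ((D.map A).count a : ℝ)|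

open Finset

lemma abs_sum_abs_sub_sum_abs_le {ι G : Type*} [AddCommGroup G] [LinearOrder G]
    [IsOrderedAddMonoid G] (s : Finset ι) (x y : ι → G) :
    |(∑ i ∈ s, |x i|) - (∑ i ∈ s, |y i|)| ≤ ∑ i ∈ s, |x i - y i| := by
  rw [← sum_sub_distrib]
  exact (abs_sum_le_sum_abs _ _).trans (sum_le_sum fun i _ => abs_abs_sub_abs_le_abs_sub _ _)

lemma abs_half_sum_abs_sub_le_one {ι : Type*} [Fintype ι] {x y e h : ι → ℝ} {s n : ℝ}
    (hs : |s| ≤ 1) (he : ∀ i, 0 ≤ e i) (hh : ∀ i, 0 ≤ h i) (hse : ∑ i, e i = 1)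
    (hsh : ∑ i, h i = n) (hxy : ∀ i, x i - y i = s * (e i - h i / n)) :
    |1 / 2 * (∑ i, |x i|) - 1 / 2 * (∑ i, |y i|)| ≤ 1 := by
  have hstep (i : ι) : |x i - y i| ≤ e i + h i / n := by
    have : 0 ≤ h i / n := div_nonneg (hh i) (hsh ▸ sum_nonneg fun j _ => hh j)
    rw [hxy, abs_mul]
    exact mul_le_of_le_one_left (abs_nonneg _) hs |>.trans
      (abs_le.2 ⟨by linarith [he i], by linarith⟩)
  calc |1 / 2 * (∑ i, |x i|) - 1 / 2 * (∑ i, |y i|)|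
      = 1 / 2 * |(∑ i, |x i|) - (∑ i, |y i|)| := by
        rw [← mul_sub, abs_mul, abs_of_pos one_half_pos]
    _ ≤ 1 / 2 * ∑ i, (e i + h i / n) := by
        gcongr
        exact (abs_sum_abs_sub_sum_abs_le _ _ _).trans (sum_le_sum fun i _ => hstep i)
    _ = 1 / 2 * (1 + n / n) := by rw [sum_add_distrib, ← sum_div, hse, hsh]
    _ ≤ 1 := by linarith [div_self_le_one n]

section

variable {T V C : Type*} [Fintype V] [DecidableEq V] [DecidableEq C]

lemma sum_count_map_eq_card (A : T → V) (s : Multiset T) :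
    ∑ a, ((s.map A).count a : ℝ) = Multiset.card s := by
  rw [← Nat.cast_sum, Multiset.sum_count_eq_card fun a _ => mem_univ a, Multiset.card_map]

lemma card_cl_le (D : Multiset T) (f : T → C) (c : C) :
    Multiset.card (cl D f c) ≤ Multiset.card D :=
  Multiset.card_le_card (Multiset.filter_le _ _)

lemma card_cl_div_card_le_one (D : Multiset T) (f : T → C) (c : C) :
    (Multiset.card (cl D f c) : ℝ) / Multiset.card D ≤ 1 :=
  div_le_one_of_le₀ (by exact_mod_cast card_cl_le D f c) (Nat.cast_nonneg _)

lemma intp_nonneg (D : Multiset T) (f : T → C) (c : C) (A : T → V) : 0 ≤ Intp D f c A := by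
  unfold Intp
  positivity

lemma intp_le_card_cl (D : Multiset T) (f : T → C) (c : C) (A : T → V) :
    Intp D f c A ≤ Multiset.card (cl D f c) := by
  set m : ℝ := (Multiset.card (cl D f c) : ℝ)
  set n : ℝ := (Multiset.card D : ℝ)
  -- `m / n * n = m` also when `n = 0`, because then the cluster is empty as well
  have hmn : m / n * n = m := div_mul_cancel_of_imp fun hn => by
    have := card_cl_le D f c
    simp_all [m, n]
  calc Intp D f c A
      ≤ 1 / 2 * ∑ a, ((((cl D f c).map A).count a : ℝ) + m / n * ((D.map A).count a : ℝ)) := by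
        unfold Intp
        gcongr with a
        exact (abs_sub _ _).trans_eq (by rw [Nat.abs_cast, abs_mul, abs_of_nonneg (by positivity),
          Nat.abs_cast])
    _ = m := by
        rw [sum_add_distrib, ← mul_sum, sum_count_map_eq_card, sum_count_map_eq_card, hmn]
        ring

lemma abs_intp_cons_sub_le_one_of_ne_zero (f : T → C) (c : C) (A : T → V) {D : Multiset T}
    (hD : D ≠ 0) (t : T) : |Intp (t ::ₘ D) f c A - Intp D f c A| ≤ 1 := by
  set g : V → ℝ := fun a => ((cl D f c).map A).count a
  set h : V → ℝ := fun a => (D.map A).count a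
  set e : V → ℝ := fun a => if a = A t then 1 else 0
  set m : ℝ := (Multiset.card (cl D f c) : ℝ)
  set n : ℝ := (Multiset.card D : ℝ)
  have hn : n ≠ 0 := Nat.cast_ne_zero.2 (mt Multiset.card_eq_zero.1 hD)
  obtain ⟨ε, hε0, hε1, hg', hm'⟩ : ∃ ε : ℝ, 0 ≤ ε ∧ ε ≤ 1 ∧
      (∀ a, (((cl (t ::ₘ D) f c).map A).count a : ℝ) = g a + ε * e a) ∧
      (Multiset.card (cl (t ::ₘ D) f c) : ℝ) = m + ε := by
    by_cases htc : f t = c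
    · refine ⟨1, zero_le_one, le_rfl, fun a => ?_, ?_⟩ <;>
        simp [cl, htc, g, e, m, Multiset.count_cons]
    · refine ⟨0, le_rfl, zero_le_one, fun a => ?_, ?_⟩ <;> simp [cl, htc, g, m]
  have hh' (a : V) : (((t ::ₘ D).map A).count a : ℝ) = h a + e a := by
    simp [h, e, Multiset.count_cons]
  have hn' : (Multiset.card (t ::ₘ D) : ℝ) = n + 1 := by simp [n]
  have hr' : |ε - (m + ε) / (n + 1)| ≤ 1 := by
    refine abs_sub_le_of_nonneg_of_le hε0 hε1 (by positivity) ?_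
    rw [← hm', ← hn']
    exact card_cl_div_card_le_one _ f c
  refine abs_half_sum_abs_sub_le_one (e := e) (h := h) hr' (fun a => by positivity)
    (fun a => by positivity) (by simp [e]) (sum_count_map_eq_card A D) fun a => ?_
  rw [hg', hm', hh', hn']
  change g a + ε * e a - (m + ε) / (n + 1) * (h a + e a) - (g a - m / n * h a) =
    (ε - (m + ε) / (n + 1)) * (e a - h a / n)
  have : n + 1 ≠ 0 := by positivity
  field_simp
  ring

end

/-- `Int_p` has sensitivity at most `1` and range `[0, |D_c|]`. -/
theorem intp_sensitivity_and_range {T V C : Type*} [Fintype V] [DecidableEq V] [DecidableEq C]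
    (f : T → C) (c : C) (A : T → V) :
    (∀ (D : Multiset T) (t : T), |Intp (t ::ₘ D) f c A - Intp D f c A| ≤ 1) ∧
    (∀ D : Multiset T,
      0 ≤ Intp D f c A ∧ Intp D f c A ≤ (Multiset.card (cl D f c) : ℝ)) := by
  refine ⟨fun D t => ?_, fun D => ⟨intp_nonneg D f c A, intp_le_card_cl D f c A⟩⟩
  rcases eq_or_ne D 0 with rfl | hD
  · have h₀ : Intp 0 f c A = 0 :=
      le_antisymm (by simpa [cl] using intp_le_card_cl 0 f c A) (intp_nonneg 0 f c A)
    rw [h₀, sub_zero, abs_of_nonneg (intp_nonneg _ f c A)]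
    exact (intp_le_card_cl {t} f c A).trans (by exact_mod_cast card_cl_le {t} f c)
  · exact abs_intp_cons_sub_le_one_of_ne_zero f c A hD t
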